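/- Let γ ∈ (1,2] and α > 1. With A(α) = 2(α^{γ-1}-1) + (γ-1)(α²-1)α^{γ-2} and B(α) = √(2(γ-1)(α-1)(α^{γ-1}-1)(α+1)³ α^{γ-3}), define Ψ₂(α) = -(A(α) - B(α))/(A(α) + B(α)). Then 0 < Ψ₂(α) < 1 for all α > 1. -/

import Mathlib

/-!
Write `t = γ - 1 ∈ (0, 1]` and `p = α ^ t`. Then `A` and `B²` are rational in `α` and `p`, and
`B² - A² = 4 (p - 1 - a) (b - (p - 1))` with `a = t p (α² - 1) / (2 α²)` and `b = t p (α² - 1) / 2`.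
Concavity of `x ↦ x ^ t` (Bernoulli's inequality at `α` and at `α⁻¹`) squeezes `p - 1` strictly
between `a` and `b`, so `0 < A < B`, which is exactly `0 < (B - A) / (A + B) < 1`.
-/

open Real

namespace Real

lemma rpow_le_one_add_mul_sub_one {x t : ℝ} (hx : 0 ≤ x) (ht₀ : 0 ≤ t) (ht₁ : t ≤ 1) :
    x ^ t ≤ 1 + t * (x - 1) := by
  simpa using rpow_one_add_le_one_add_mul_self (s := x - 1) (by linarith) ht₀ ht₁

lemma mul_sub_one_mul_rpow_div_le {x t : ℝ} (hx : 0 < x) (ht₀ : 0 ≤ t) (ht₁ : t ≤ 1) :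
    t * (x - 1) * x ^ t / x ≤ x ^ t - 1 := by
  have hinv := rpow_le_one_add_mul_sub_one (inv_nonneg.2 hx.le) ht₀ ht₁
  rw [inv_rpow hx.le, inv_le_iff_one_le_mul₀' (rpow_pos_of_pos hx t)] at hinv
  rw [div_le_iff₀ hx]
  have : x ^ t * (1 + t * (x⁻¹ - 1)) * x = x ^ t * x - t * (x - 1) * x ^ t := by
    field_simp
    ring
  nlinarith

end Real

noncomputable def shockA (γ α : ℝ) : ℝ :=
  2 * (α ^ (γ - 1) - 1) + (γ - 1) * (α ^ 2 - 1) * α ^ (γ - 2)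

noncomputable def shockBSq (γ α : ℝ) : ℝ :=
  2 * (γ - 1) * (α - 1) * (α ^ (γ - 1) - 1) * (α + 1) ^ 3 * α ^ (γ - 3)

section

variable {γ α : ℝ}

lemma shockA_eq (hα : 0 < α) :
    shockA γ α = 2 * (α ^ (γ - 1) - 1) + (γ - 1) * (α ^ 2 - 1) * (α ^ (γ - 1) / α) := by
  rw [shockA, show γ - 2 = γ - 1 - 1 by ring, rpow_sub_one hα.ne' (γ - 1)]

lemma shockBSq_eq (hα : 0 < α) :
    shockBSq γ α =
      2 * (γ - 1) * (α - 1) * (α ^ (γ - 1) - 1) * (α + 1) ^ 3 * (α ^ (γ - 1) / α ^ 2) := by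
  rw [shockBSq, show γ - 3 = γ - 1 - (2 : ℕ) by push_cast; ring, rpow_sub_natCast hα.ne']

lemma shockA_pos (hγ : 1 < γ) (hα : 1 < α) : 0 < shockA γ α := by
  have hα₀ : 0 < α := one_pos.trans hα
  have hp : 1 < α ^ (γ - 1) := one_lt_rpow hα (by linarith)
  rw [shockA_eq hα₀]
  have : 0 < (γ - 1) * (α ^ 2 - 1) * (α ^ (γ - 1) / α) := by
    have : 1 < α ^ 2 := one_lt_pow₀ hα two_ne_zero
    have : 0 < α ^ (γ - 1) := by linarith
    apply mul_pos (mul_pos _ _) (div_pos _ hα₀) <;> linarith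
  linarith

lemma sq_shockA_lt_shockBSq (hγ₁ : 1 < γ) (hγ₂ : γ ≤ 2) (hα : 1 < α) :
    shockA γ α ^ 2 < shockBSq γ α := by
  have hα₀ : 0 < α := one_pos.trans hα
  rw [shockA_eq hα₀, shockBSq_eq hα₀]
  set t := γ - 1
  set p := α ^ t
  have ht₀ : 0 < t := by linarith
  have hp : 1 < p := one_lt_rpow hα ht₀
  have hfactor : 2 * t * (α - 1) * (p - 1) * (α + 1) ^ 3 * (p / α ^ 2)
      - (2 * (p - 1) + t * (α ^ 2 - 1) * (p / α)) ^ 2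
      = 4 * ((p - 1 - t * p * (α ^ 2 - 1) / (2 * α ^ 2)) * (t * p * (α ^ 2 - 1) / 2 - (p - 1))) := by
    field_simp
    ring
  have hlower : t * p * (α ^ 2 - 1) / (2 * α ^ 2) < p - 1 := by
    have hconc := mul_sub_one_mul_rpow_div_le hα₀ ht₀.le (by linarith : t ≤ 1)
    have : t * p * (α ^ 2 - 1) / (2 * α ^ 2) < t * (α - 1) * p / α := by
      rw [div_lt_div_iff₀ (by positivity) hα₀]
      have : 0 < t * p * α * (α - 1) * (α - 1) := by
        have := sub_pos.2 hα
        positivity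
      nlinarith
    linarith
  have hupper : p - 1 < t * p * (α ^ 2 - 1) / 2 := by
    have hconc := rpow_le_one_add_mul_sub_one hα₀.le ht₀.le (by linarith : t ≤ 1)
    have : 0 < t * (α - 1) * (p * (α + 1) - 2) :=
      mul_pos (mul_pos ht₀ (sub_pos.2 hα)) (by nlinarith)
    nlinarith
  nlinarith [mul_pos (sub_pos.2 hlower) (sub_pos.2 hupper)]

end

lemma neg_div_mem_Ioo_of_pos_of_lt {A B : ℝ} (hA : 0 < A) (hAB : A < B) :
    0 < -((A - B) / (A + B)) ∧ -((A - B) / (A + B)) < 1 := by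
  rw [← neg_div, neg_sub]
  exact ⟨div_pos (by linarith) (by linarith), (div_lt_one (by linarith)).2 (by linarith)⟩

/-- The slope Ψ₂ = -(A-B)/(A+B) of the 2-shock curve lies in (0,1) for α > 1. -/
theorem stmt_16 (γ α : ℝ) (hγ : γ ∈ Set.Ioc (1:ℝ) 2) (hα : 1 < α)
    (A B : ℝ)
    (hA : A = 2 * (α ^ (γ - 1) - 1) + (γ - 1) * (α ^ 2 - 1) * α ^ (γ - 2))
    (hB : B = Real.sqrt (2 * (γ - 1) * (α - 1) * (α ^ (γ - 1) - 1) * (α + 1) ^ 3 *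
        α ^ (γ - 3))) :
    0 < -((A - B) / (A + B)) ∧ -((A - B) / (A + B)) < 1 := by
  obtain ⟨hγ₁, hγ₂⟩ := hγ
  have hA_pos : 0 < A := hA ▸ shockA_pos hγ₁ hα
  have hAB : A < B := by
    rw [hB, lt_sqrt hA_pos.le, hA]
    exact sq_shockA_lt_shockBSq hγ₁ hγ₂ hα
  exact neg_div_mem_Ioo_of_pos_of_lt hA_pos hAB
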